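/- Every medium (S,T) is isomorphic to the representing medium (F, G_F) of some well-graded family F of finite subsets of a set X; that is, there exist bijections α : S → F and β : T → G_F such that for all states S, V and every token τ: Sτ = V if and only if α(S)β(τ) = α(V). -/

import Mathlib

/-!
Fix a base state `s₀`. By [M2] a closed message contains every token as often as its reverse, so
the balance `#τ - #τ̃` of `τ` along a stepwise effective message from `P` to `Q` depends only on
`P` and `Q`; along a concise message it lies in `{-1, 0, 1}` and is `1` exactly for the tokens that
occur. Hence the content of a state `s`, the set of tokens of a concise message from `s₀` to `s`,
is well defined; the contents of `a` and `b` differ in as many tokens as a concise message from `a`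
to `b` has, and an effective step by `τ` either adds `τ` to the content or removes `τ̃`. So
`s ↦ content s` is injective with a well-graded image, and conjugation by it turns `τ` into `γ_τ`,
or into `γ̃_τ̃` when `τ̃` lies in some content. The representing medium is then isomorphic to a
medium, hence a medium itself.
-/

open scoped Classical symmDiff

universe u

namespace Media

variable {S : Type u}

/-- The state obtained by applying the message (string of tokens) `m` to the state `s`. -/
def apply (s : S) (m : List (S → S)) : S :=
  m.foldl (fun x τ => τ x) s

/-- The sequence of states `S₀ = s, S₁, …, Sₙ` produced by the message `m` from the state `s`. -/
def produced (s : S) (m : List (S → S)) : List S :=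
  m.scanl (fun x τ => τ x) s

/-- `τ'` is a reverse of the token `τ`. -/
def IsReverse (τ τ' : S → S) : Prop :=
  ∀ P Q : S, P ≠ Q → (τ P = Q ↔ τ' Q = P)

/-- The message `m` is stepwise effective for the state `s`. -/
def StepwiseEffective (s : S) (m : List (S → S)) : Prop :=
  List.Chain' (· ≠ ·) (produced s m)

/-- The message `m` is consistent: it does not contain both a token and its reverse. -/
def Consistent (m : List (S → S)) : Prop :=
  ∀ τ ∈ m, ∀ τ' ∈ m, ¬ IsReverse τ τ'

/-- The message `m` is concise for the state `s`. -/
def Concise (s : S) (m : List (S → S)) : Prop :=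
  StepwiseEffective s m ∧ Consistent m ∧ m.Nodup

/-- The message `m` is vacuous: its indices can be partitioned into pairs of
mutually reverse tokens. -/
def Vacuous (m : List (S → S)) : Prop :=
  ∃ f : Fin m.length → Fin m.length, Function.Involutive f ∧
    (∀ i, f i ≠ i) ∧ ∀ i, IsReverse (m.get i) (m.get (f i))

/-- The message `m` is closed for the state `s`. -/
def Closed (s : S) (m : List (S → S)) : Prop :=
  StepwiseEffective s m ∧ apply s m = s

/-- `(S, T)` is a medium: a token system satisfying axioms [M1] and [M2]. -/
def IsMedium (T : Set (S → S)) : Prop :=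
  (∃ a b : S, a ≠ b) ∧ T.Nonempty ∧ (∀ τ ∈ T, τ ≠ id) ∧
  (∀ P Q : S, P ≠ Q →
    ∃ m : List (S → S), (∀ τ ∈ m, τ ∈ T) ∧ Concise P m ∧ apply P m = Q) ∧
  (∀ (P : S) (m : List (S → S)), (∀ τ ∈ m, τ ∈ T) → Closed P m → Vacuous m)

end Media

namespace Media

variable {X : Type u}

/-- The token `γ_x` adding `x` to a member of the family `F` (when possible). -/
noncomputable def gammaAdd (F : Set (Finset X)) (x : X) : ↥F → ↥F :=
  fun A => if h : insert x (A : Finset X) ∈ F then ⟨insert x (A : Finset X), h⟩ else A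

/-- The token `γ̃_x` removing `x` from a member of the family `F` (when possible). -/
noncomputable def gammaRemove (F : Set (Finset X)) (x : X) : ↥F → ↥F :=
  fun A => if h : (A : Finset X).erase x ∈ F then ⟨(A : Finset X).erase x, h⟩ else A

/-- The family `G_F` of all transformations `γ_x`, `γ̃_x` for `x ∈ ∪F \ ∩F`. -/
def mediumTokens (F : Set (Finset X)) : Set (↥F → ↥F) :=
  {g | ∃ x : X, (∃ A ∈ F, x ∈ A) ∧ (∃ B ∈ F, x ∉ B) ∧
    (g = gammaAdd F x ∨ g = gammaRemove F x)}

/-- A family of finite subsets of `X` is well-graded. -/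
def WellGraded (F : Set (Finset X)) : Prop :=
  ∀ A ∈ F, ∀ B ∈ F, A ≠ B →
    ∃ c : ℕ → Finset X,
      c 0 = A ∧ c ((A ∆ B).card) = B ∧
      (∀ i ≤ (A ∆ B).card, c i ∈ F) ∧
      (∀ i, 1 ≤ i → i ≤ (A ∆ B).card → (c (i - 1) ∆ c i).card = 1)

end Media

open Media

namespace Media

section Messages

variable {S : Type*}

@[simp] theorem apply_nil (s : S) : apply s [] = s := rfl

@[simp] theorem apply_cons (s : S) (τ : S → S) (m : List (S → S)) :
    apply s (τ :: m) = apply (τ s) m := rfl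

theorem apply_append (s : S) (m w : List (S → S)) :
    apply s (m ++ w) = apply (apply s m) w :=
  List.foldl_append ..

theorem apply_take_succ (s : S) {m : List (S → S)} {j : ℕ} (hj : j < m.length) :
    apply s (m.take (j + 1)) = m[j] (apply s (m.take j)) := by
  rw [← List.take_concat_get' m j hj, apply_append]
  rfl

@[simp] theorem stepwiseEffective_nil (s : S) : StepwiseEffective s [] :=
  List.IsChain.singleton s

theorem stepwiseEffective_cons {s : S} {τ : S → S} {m : List (S → S)} :
    StepwiseEffective s (τ :: m) ↔ s ≠ τ s ∧ StepwiseEffective (τ s) m := by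
  rw [StepwiseEffective, StepwiseEffective, produced, produced, List.scanl_cons]
  change List.IsChain _ _ ↔ _ ∧ List.IsChain _ _
  cases m <;> simp

theorem StepwiseEffective.append {s : S} {m w : List (S → S)} (hm : StepwiseEffective s m)
    (hw : StepwiseEffective (apply s m) w) : StepwiseEffective s (m ++ w) := by
  induction m generalizing s with
  | nil => exact hw
  | cons τ m ih =>
    rw [List.cons_append, stepwiseEffective_cons]
    exact ⟨(stepwiseEffective_cons.1 hm).1, ih (stepwiseEffective_cons.1 hm).2 hw⟩

theorem StepwiseEffective.apply_take_ne {s : S} {m : List (S → S)} (hm : StepwiseEffective s m)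
    {j : ℕ} (hj : j < m.length) : m[j] (apply s (m.take j)) ≠ apply s (m.take j) := by
  induction m generalizing s j with
  | nil => simp at hj
  | cons τ m ih =>
    rw [stepwiseEffective_cons] at hm
    cases j with
    | zero => exact hm.1.symm
    | succ j => exact ih hm.2 (by simpa using hj)

theorem closed_append {P : S} {m w : List (S → S)} (hm : StepwiseEffective P m)
    (hw : StepwiseEffective (apply P m) w) (hmw : apply (apply P m) w = P) :
    Closed P (m ++ w) :=
  ⟨hm.append hw, by rw [apply_append, hmw]⟩

end Messages

section Reverse

variable {S : Type*}

theorem IsReverse.symm {τ σ : S → S} (h : IsReverse τ σ) : IsReverse σ τ :=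
  fun P Q hPQ => (h Q P hPQ.symm).symm

theorem IsReverse.unique {τ σ σ' : S → S} (h : IsReverse τ σ) (h' : IsReverse τ σ') :
    σ = σ' := by
  funext Q
  by_cases hQ : ∃ P, P ≠ Q ∧ τ P = Q
  · obtain ⟨P, hPQ, rfl⟩ := hQ
    rw [(h P _ hPQ).1 rfl, (h' P _ hPQ).1 rfl]
  · push Not at hQ
    -- a reverse of `τ` can only move `Q` to a `τ`-preimage of `Q`
    have hfix : ∀ σ, IsReverse τ σ → σ Q = Q := fun σ hσ =>
      by_contra fun hne => hQ _ hne ((hσ _ Q hne).2 rfl)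
    rw [hfix σ h, hfix σ' h']

/-- The junk value `id` is taken when `τ` has no reverse. -/
noncomputable def rev (τ : S → S) : S → S :=
  if h : ∃ σ, IsReverse τ σ then h.choose else id

theorem IsReverse.rev_eq {τ σ : S → S} (h : IsReverse τ σ) : rev τ = σ := by
  have hex : ∃ σ, IsReverse τ σ := ⟨σ, h⟩
  rw [rev, dif_pos hex]
  exact hex.choose_spec.unique h

theorem _root_.List.count_eq_card_filter_getElem {α : Type*} (m : List α) (a : α) :
    m.count a = (Finset.univ.filter fun i : Fin m.length => m[i] = a).card := by
  conv_lhs => rw [← List.map_get_finRange m]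
  rw [List.count_eq_countP, List.countP_map, Finset.card_def, Finset.filter_val, Fin.univ_def]
  simp [List.countP_eq_length_filter]
  congr 1

theorem Vacuous.count_eq {m : List (S → S)} (hm : Vacuous m) {τ σ : S → S}
    (h : IsReverse τ σ) : m.count τ = m.count σ := by
  obtain ⟨p, hp, -, hrev⟩ := hm
  rw [List.count_eq_card_filter_getElem, List.count_eq_card_filter_getElem]
  refine Finset.card_nbij' p p ?_ ?_ (fun i _ => hp i) (fun i _ => hp i)
  all_goals
    intro i hi
    simp only [Finset.coe_filter, Finset.mem_univ, true_and, Set.mem_ofPred_eq] at hi ⊢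
    have hpair := hrev i
    rw [List.get_eq_getElem, List.get_eq_getElem, ← Fin.getElem_fin, hi] at hpair
  exacts [hpair.unique h, hpair.unique h.symm]

theorem Vacuous.map {S' : Type*} {f : (S → S) → (S' → S')}
    (hf : ∀ τ σ, IsReverse τ σ → IsReverse (f τ) (f σ)) {m : List (S → S)} (hm : Vacuous m) :
    Vacuous (m.map f) := by
  obtain ⟨p, hp, hne, hrev⟩ := hm
  let e := finCongr (m.length_map f)
  refine ⟨e.symm ∘ p ∘ e, fun i => by simp [hp _], fun i h => hne (e i) ?_, fun i => ?_⟩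
  · simpa using congrArg e h
  · simpa [e] using hf _ _ (hrev (e i))

end Reverse

section Conjugation

variable {S S' : Type*}

theorem apply_map_conj (e : S ≃ S') (s : S) (m : List (S → S)) :
    apply (e s) (m.map e.conj) = e (apply s m) := by
  induction m generalizing s with
  | nil => rfl
  | cons τ m ih => simpa using ih (τ s)

theorem stepwiseEffective_map_conj (e : S ≃ S') (s : S) (m : List (S → S)) :
    StepwiseEffective (e s) (m.map e.conj) ↔ StepwiseEffective s m := by
  induction m generalizing s with
  | nil => simp
  | cons τ m ih =>
    simp only [List.map_cons, stepwiseEffective_cons, Equiv.conj_apply, Equiv.symm_apply_apply,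
      ne_eq, EmbeddingLike.apply_eq_iff_eq, ih]

theorem isReverse_conj (e : S ≃ S') {τ σ : S → S} :
    IsReverse (e.conj τ) (e.conj σ) ↔ IsReverse τ σ := by
  refine ⟨fun h P Q hPQ => ?_, fun h P' Q' hPQ => ?_⟩
  · simpa using h (e P) (e Q) (e.injective.ne hPQ)
  · simpa [← Equiv.eq_symm_apply] using h _ _ (e.symm.injective.ne hPQ)

theorem IsMedium.map_conj {T : Set (S → S)} (hM : IsMedium T) (e : S ≃ S') :
    IsMedium (e.conj '' T) := by
  obtain ⟨⟨a, b, hab⟩, ⟨τ₀, hτ₀⟩, hid, hM1, hM2⟩ := hM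
  refine ⟨⟨e a, e b, e.injective.ne hab⟩, ⟨e.conj τ₀, τ₀, hτ₀, rfl⟩, ?_, ?_, ?_⟩
  · rintro _ ⟨τ, hτ, rfl⟩ h
    exact hid τ hτ (e.conj.injective (h.trans (by ext; simp)))
  · intro P' Q' hPQ
    obtain ⟨P, rfl⟩ := e.surjective P'
    obtain ⟨Q, rfl⟩ := e.surjective Q'
    obtain ⟨m, hmT, ⟨hse, hcons, hnd⟩, rfl⟩ := hM1 P Q (ne_of_apply_ne e hPQ)
    refine ⟨m.map e.conj, fun g hg => ?_,
      ⟨(stepwiseEffective_map_conj e P m).2 hse, ?_, hnd.map e.conj.injective⟩,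
      apply_map_conj e P m⟩
    · obtain ⟨τ, hτ, rfl⟩ := List.mem_map.1 hg
      exact ⟨τ, hmT τ hτ, rfl⟩
    simp only [Consistent, List.mem_map, forall_exists_index, and_imp]
    rintro _ τ hτ rfl _ σ hσ rfl
    rw [isReverse_conj]
    exact hcons τ hτ σ hσ
  · intro P' m' hmT' hcl
    obtain ⟨P, rfl⟩ := e.surjective P'
    obtain ⟨m, rfl⟩ : ∃ m, m.map e.conj = m' :=
      ⟨m'.map e.conj.symm, by rw [List.map_map, Equiv.self_comp_symm, List.map_id]⟩
    have hmT : ∀ τ ∈ m, τ ∈ T := fun τ hτ => by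
      obtain ⟨σ, hσ, hστ⟩ := hmT' _ (List.mem_map_of_mem hτ)
      rwa [← e.conj.injective hστ]
    refine Vacuous.map (fun τ σ => (isReverse_conj e).2) (hM2 P m hmT ⟨?_, ?_⟩)
    · exact (stepwiseEffective_map_conj e P m).1 hcl.1
    · exact e.injective ((apply_map_conj e P m).symm.trans hcl.2)

end Conjugation

section NetCount

variable {S : Type*}

noncomputable def netCount (m : List (S → S)) (τ : S → S) : ℤ :=
  m.count τ - m.count (rev τ)

theorem netCount_append (m w : List (S → S)) (τ : S → S) :
    netCount (m ++ w) τ = netCount m τ + netCount w τ := by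
  simp only [netCount, List.count_append]
  push_cast
  ring

theorem netCount_singleton (τ σ : S → S) :
    netCount [τ] σ = (if τ = σ then 1 else 0) - (if τ = rev σ then 1 else 0) := by
  simp [netCount, List.count_singleton]

theorem Concise.netCount_le_one {P : S} {m : List (S → S)} (hm : Concise P m)
    (τ : S → S) : netCount m τ ≤ 1 := by
  have := List.nodup_iff_count_le_one.1 hm.2.2 τ
  unfold netCount
  omega

theorem Concise.neg_one_le_netCount {P : S} {m : List (S → S)} (hm : Concise P m)
    (τ : S → S) : -1 ≤ netCount m τ := by
  have := List.nodup_iff_count_le_one.1 hm.2.2 (rev τ)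
  unfold netCount
  omega

end NetCount

namespace IsMedium

variable {S : Type*} {T : Set (S → S)}

theorem exists_concise (hM : IsMedium T) (P Q : S) :
    ∃ m : List (S → S), (∀ τ ∈ m, τ ∈ T) ∧ Concise P m ∧ apply P m = Q := by
  by_cases hPQ : P = Q
  · exact ⟨[], by simp, ⟨stepwiseEffective_nil P, by simp [Consistent], List.nodup_nil⟩, hPQ⟩
  · exact hM.2.2.2.1 P Q hPQ

theorem vacuous_of_closed (hM : IsMedium T) {P : S} {m : List (S → S)}
    (hmT : ∀ τ ∈ m, τ ∈ T) (hm : Closed P m) : Vacuous m :=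
  hM.2.2.2.2 P m hmT hm

theorem exists_apply_ne (hM : IsMedium T) {τ : S → S} (hτ : τ ∈ T) : ∃ P, τ P ≠ P := by
  by_contra! h
  exact hM.2.2.1 τ hτ (funext h)

theorem exists_isReverse_mem (hM : IsMedium T) {τ : S → S} (hτ : τ ∈ T) {P : S}
    (hP : τ P ≠ P) {m : List (S → S)} (hmT : ∀ σ ∈ m, σ ∈ T) (hm : Concise (τ P) m)
    (hma : apply (τ P) m = P) : ∃ σ ∈ m, IsReverse τ σ := by
  have hcl : Closed P (τ :: m) := ⟨stepwiseEffective_cons.2 ⟨hP.symm, hm.1⟩, hma⟩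
  obtain ⟨p, -, hp, hrev⟩ :=
    hM.vacuous_of_closed (List.forall_mem_cons.2 ⟨hτ, hmT⟩) hcl
  obtain ⟨k, hk⟩ : ∃ k : Fin m.length, k.succ = p 0 := Fin.exists_succ_eq.2 (hp 0)
  refine ⟨m.get k, m.get_mem k, ?_⟩
  simpa [← hk] using hrev 0

theorem exists_isReverse (hM : IsMedium T) {τ : S → S} (hτ : τ ∈ T) :
    ∃ σ ∈ T, IsReverse τ σ := by
  obtain ⟨P, hP⟩ := hM.exists_apply_ne hτ
  obtain ⟨m, hmT, hm, hma⟩ := hM.exists_concise (τ P) P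
  obtain ⟨σ, hσ, hrev⟩ := hM.exists_isReverse_mem hτ hP hmT hm hma
  exact ⟨σ, hmT σ hσ, hrev⟩

theorem not_isReverse_self (hM : IsMedium T) {τ : S → S} (hτ : τ ∈ T) : ¬IsReverse τ τ := by
  intro hself
  obtain ⟨P, hP⟩ := hM.exists_apply_ne hτ
  obtain ⟨m, hmT, hm, hma⟩ := hM.exists_concise (τ P) P
  obtain ⟨σ, hσ, hrev⟩ := hM.exists_isReverse_mem hτ hP hmT hm hma
  obtain rfl := hself.unique hrev
  exact hm.2.1 τ hσ τ hσ hself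

theorem isReverse_rev (hM : IsMedium T) {τ : S → S} (hτ : τ ∈ T) : IsReverse τ (rev τ) := by
  obtain ⟨σ, -, hσ⟩ := hM.exists_isReverse hτ
  rwa [hσ.rev_eq]

theorem rev_mem (hM : IsMedium T) {τ : S → S} (hτ : τ ∈ T) : rev τ ∈ T := by
  obtain ⟨σ, hσT, hσ⟩ := hM.exists_isReverse hτ
  rwa [hσ.rev_eq]

theorem rev_rev (hM : IsMedium T) {τ : S → S} (hτ : τ ∈ T) : rev (rev τ) = τ :=
  (hM.isReverse_rev hτ).symm.rev_eq

theorem rev_ne (hM : IsMedium T) {τ : S → S} (hτ : τ ∈ T) : rev τ ≠ τ :=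
  fun h => hM.not_isReverse_self hτ (by simpa [h] using hM.isReverse_rev hτ)

theorem concise_singleton (hM : IsMedium T) {τ : S → S} (hτ : τ ∈ T) {P : S} (hP : τ P ≠ P) :
    Concise P [τ] :=
  ⟨stepwiseEffective_cons.2 ⟨hP.symm, stepwiseEffective_nil _⟩,
    by simpa [Consistent] using hM.not_isReverse_self hτ, List.nodup_singleton τ⟩

theorem netCount_eq_zero_of_closed (hM : IsMedium T) {P : S} {m : List (S → S)}
    (hmT : ∀ σ ∈ m, σ ∈ T) (hm : Closed P m) {τ : S → S} (hτ : τ ∈ T) : netCount m τ = 0 := by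
  rw [netCount, (hM.vacuous_of_closed hmT hm).count_eq (hM.isReverse_rev hτ), sub_self]

theorem netCount_rev (hM : IsMedium T) {τ : S → S} (hτ : τ ∈ T) (m : List (S → S)) :
    netCount m (rev τ) = -netCount m τ := by
  rw [netCount, netCount, hM.rev_rev hτ, neg_sub]

theorem netCount_eq_one_iff (hM : IsMedium T) {P : S} {m : List (S → S)}
    (hmT : ∀ σ ∈ m, σ ∈ T) (hm : Concise P m) {τ : S → S} : netCount m τ = 1 ↔ τ ∈ m := by
  refine ⟨fun h => List.count_pos_iff.1 (by unfold netCount at h; omega), fun h => ?_⟩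
  have hrev : rev τ ∉ m := fun h' => hm.2.1 τ h (rev τ) h' (hM.isReverse_rev (hmT τ h))
  rw [netCount, List.count_eq_one_of_mem hm.2.2 h, List.count_eq_zero_of_not_mem hrev]
  rfl

theorem netCount_singleton_self (hM : IsMedium T) {τ : S → S} (hτ : τ ∈ T) :
    netCount [τ] τ = 1 := by
  simp [netCount_singleton, (hM.rev_ne hτ).symm]

theorem netCount_singleton_of_ne (hM : IsMedium T) {τ σ : S → S} (hσ : σ ∈ T) (hστ : σ ≠ τ)
    (hσr : σ ≠ rev τ) : netCount [τ] σ = 0 := by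
  have hτr : τ ≠ rev σ := fun h => hσr (by rw [h, hM.rev_rev hσ])
  simp [netCount_singleton, hστ.symm, hτr]

noncomputable def msg (hM : IsMedium T) (P Q : S) : List (S → S) :=
  (hM.exists_concise P Q).choose

theorem msg_mem (hM : IsMedium T) (P Q : S) : ∀ τ ∈ hM.msg P Q, τ ∈ T :=
  (hM.exists_concise P Q).choose_spec.1

theorem concise_msg (hM : IsMedium T) (P Q : S) : Concise P (hM.msg P Q) :=
  (hM.exists_concise P Q).choose_spec.2.1

theorem apply_msg (hM : IsMedium T) (P Q : S) : apply P (hM.msg P Q) = Q :=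
  (hM.exists_concise P Q).choose_spec.2.2

/-- By `balance_eq_netCount`, the same for every stepwise effective message from `P` to `Q`. -/
noncomputable def balance (hM : IsMedium T) (P Q : S) (τ : S → S) : ℤ :=
  netCount (hM.msg P Q) τ

/-- The content of `Q` relative to `P`; by `content_eq_toFinset`, the tokens of any concise message
from `P` to `Q`. -/
noncomputable def content (hM : IsMedium T) (P Q : S) : Finset (S → S) :=
  (hM.msg P Q).toFinset

theorem balance_eq_netCount (hM : IsMedium T) {P Q : S} {m : List (S → S)}
    (hmT : ∀ σ ∈ m, σ ∈ T) (hm : StepwiseEffective P m) (hma : apply P m = Q) {τ : S → S}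
    (hτ : τ ∈ T) : hM.balance P Q τ = netCount m τ := by
  -- both `m` and `msg P Q` are closed up by `msg Q P`
  have key : ∀ w : List (S → S), (∀ σ ∈ w, σ ∈ T) → StepwiseEffective P w → apply P w = Q →
      netCount w τ = -netCount (hM.msg Q P) τ := by
    intro w hwT hw hwa
    have hcl : Closed P (w ++ hM.msg Q P) :=
      closed_append hw (hwa ▸ (hM.concise_msg Q P).1) (hwa ▸ hM.apply_msg Q P)
    have := hM.netCount_eq_zero_of_closed (List.forall_mem_append.2 ⟨hwT, hM.msg_mem Q P⟩) hcl hτ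
    rw [netCount_append] at this
    omega
  rw [balance, key _ (hM.msg_mem P Q) (hM.concise_msg P Q).1 (hM.apply_msg P Q),
    key m hmT hm hma]

theorem balance_add (hM : IsMedium T) (P Q R : S) {τ : S → S} (hτ : τ ∈ T) :
    hM.balance P Q τ + hM.balance Q R τ = hM.balance P R τ := by
  rw [hM.balance_eq_netCount (Q := R) (m := hM.msg P Q ++ hM.msg Q R)
      (List.forall_mem_append.2 ⟨hM.msg_mem P Q, hM.msg_mem Q R⟩)
      ((hM.concise_msg P Q).1.append (by rw [hM.apply_msg]; exact (hM.concise_msg Q R).1))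
      (by rw [apply_append, hM.apply_msg, hM.apply_msg]) hτ,
    netCount_append, balance, balance]

theorem balance_self (hM : IsMedium T) (P : S) {τ : S → S} (hτ : τ ∈ T) :
    hM.balance P P τ = 0 := by
  have := hM.balance_add P P P hτ
  omega

theorem balance_rev (hM : IsMedium T) (P Q : S) {τ : S → S} (hτ : τ ∈ T) :
    hM.balance P Q (rev τ) = -hM.balance P Q τ :=
  hM.netCount_rev hτ _

theorem abs_balance_le_one (hM : IsMedium T) (P Q : S) (τ : S → S) :
    |hM.balance P Q τ| ≤ 1 :=
  abs_le.2 ⟨(hM.concise_msg P Q).neg_one_le_netCount τ, (hM.concise_msg P Q).netCount_le_one τ⟩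

theorem balance_apply (hM : IsMedium T) {τ : S → S} (hτ : τ ∈ T) {P : S} (hP : τ P ≠ P)
    {σ : S → S} (hσ : σ ∈ T) : hM.balance P (τ P) σ = netCount [τ] σ :=
  hM.balance_eq_netCount (by simpa using hτ) (hM.concise_singleton hτ hP).1 rfl hσ

theorem mem_content (hM : IsMedium T) {P Q : S} {τ : S → S} :
    τ ∈ hM.content P Q ↔ hM.balance P Q τ = 1 := by
  rw [content, List.mem_toFinset, balance,
    hM.netCount_eq_one_iff (hM.msg_mem P Q) (hM.concise_msg P Q)]

theorem mem_of_mem_content (hM : IsMedium T) {P Q : S} {τ : S → S}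
    (h : τ ∈ hM.content P Q) : τ ∈ T :=
  hM.msg_mem P Q τ (List.mem_toFinset.1 h)

theorem content_self (hM : IsMedium T) (P : S) : hM.content P P = ∅ :=
  Finset.eq_empty_of_forall_notMem fun τ h => by
    have := hM.mem_content.1 h
    rw [hM.balance_self P (hM.mem_of_mem_content h)] at this
    exact zero_ne_one this

theorem content_eq_toFinset (hM : IsMedium T) {P Q : S} {m : List (S → S)}
    (hmT : ∀ σ ∈ m, σ ∈ T) (hm : Concise P m) (hma : apply P m = Q) :
    hM.content P Q = m.toFinset := by
  ext τ
  by_cases hτ : τ ∈ T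
  · rw [mem_content, List.mem_toFinset, hM.balance_eq_netCount hmT hm.1 hma hτ,
      hM.netCount_eq_one_iff hmT hm]
  · exact iff_of_false (fun h => hτ (hM.mem_of_mem_content h))
      (fun h => hτ (hmT τ (List.mem_toFinset.1 h)))

theorem card_content (hM : IsMedium T) {P Q : S} {m : List (S → S)}
    (hmT : ∀ σ ∈ m, σ ∈ T) (hm : Concise P m) (hma : apply P m = Q) :
    (hM.content P Q).card = m.length := by
  rw [hM.content_eq_toFinset hmT hm hma, List.toFinset_card_of_nodup hm.2.2]

theorem content_apply (hM : IsMedium T) {τ : S → S} (hτ : τ ∈ T) {P : S} (hP : τ P ≠ P) :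
    hM.content P (τ P) = {τ} := by
  rw [hM.content_eq_toFinset (Q := τ P) (by simpa using hτ) (hM.concise_singleton hτ hP) rfl]
  rfl

/-- `σ ↦ σ` or `σ̃`, whichever lies in the content of `b`, matches the tokens on which the contents
of `a` and `b` differ with those of a concise message from `a` to `b`. -/
theorem card_symmDiff_content (hM : IsMedium T) (s₀ a b : S) :
    (hM.content s₀ a ∆ hM.content s₀ b).card = (hM.content a b).card := by
  let g : (S → S) → (S → S) := fun σ => if σ ∈ hM.content s₀ b then σ else rev σ
  have hT : ∀ σ, σ ∈ hM.content s₀ a ∨ σ ∈ hM.content s₀ b ∨ σ ∈ hM.content a b → σ ∈ T := by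
    rintro σ (h | h | h) <;> exact hM.mem_of_mem_content h
  refine Finset.card_nbij' g g ?_ ?_ ?_ ?_
  all_goals
    intro σ hσ
    simp only [Set.mem_symmDiff, Finset.coe_symmDiff, Finset.mem_coe] at hσ ⊢
    have hσT := hT σ (by tauto)
    -- what is left is linear arithmetic on the three balances of `σ`
    have := hM.balance_add s₀ a b hσT
    have := abs_le.1 (hM.abs_balance_le_one s₀ a σ)
    have := abs_le.1 (hM.abs_balance_le_one s₀ b σ)
    have := abs_le.1 (hM.abs_balance_le_one a b σ)
    simp only [g]
    split_ifs <;> simp only [mem_content, hM.balance_rev _ _ hσT, hM.rev_rev hσT] at * <;> omega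

theorem content_injective (hM : IsMedium T) (s₀ : S) : Function.Injective (hM.content s₀) := by
  intro a b hab
  have hlen := hM.card_symmDiff_content s₀ a b
  rw [hab, symmDiff_self, Finset.bot_eq_empty, Finset.card_empty,
    hM.card_content (hM.msg_mem a b) (hM.concise_msg a b) (hM.apply_msg a b)] at hlen
  simpa [List.eq_nil_of_length_eq_zero hlen.symm] using hM.apply_msg a b

theorem wellGraded_range_content (hM : IsMedium T) (s₀ : S) :
    WellGraded (Set.range (hM.content s₀)) := by
  rintro _ ⟨a, rfl⟩ _ ⟨b, rfl⟩ -
  set m := hM.msg a b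
  have hn : (hM.content s₀ a ∆ hM.content s₀ b).card = m.length := by
    rw [card_symmDiff_content, hM.card_content (hM.msg_mem a b) (hM.concise_msg a b)
      (hM.apply_msg a b)]
  refine ⟨fun i => hM.content s₀ (apply a (m.take i)), by simp, by simp [hn, m, hM.apply_msg],
    fun i _ => Set.mem_range_self _, fun i hi1 hi2 => ?_⟩
  obtain ⟨j, rfl⟩ : ∃ j, i = j + 1 := ⟨i - 1, by omega⟩
  have hj : j < m.length := by omega
  have hτ : m[j] ∈ T := hM.msg_mem a b _ (List.getElem_mem hj)
  have hmove := (hM.concise_msg a b).1.apply_take_ne hj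
  simp only [Nat.add_sub_cancel, apply_take_succ a hj]
  rw [card_symmDiff_content, hM.content_apply hτ hmove, Finset.card_singleton]

/-- An effective step by `τ` adds `τ` to the content, or removes `τ̃` from it. -/
theorem mem_content_apply_iff (hM : IsMedium T) (s₀ : S) {τ : S → S} (hτ : τ ∈ T) {s : S}
    (hs : τ s ≠ s) {σ : S → S} :
    σ ∈ hM.content s₀ (τ s) ↔
      σ = τ ∧ rev τ ∉ hM.content s₀ s ∨ σ ≠ rev τ ∧ σ ∈ hM.content s₀ s := by
  by_cases hσ : σ ∈ T
  swap
  · exact iff_of_false (fun h => hσ (hM.mem_of_mem_content h))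
      (by rintro (⟨rfl, -⟩ | ⟨-, h⟩) <;> [exact hσ hτ; exact hσ (hM.mem_of_mem_content h)])
  have hstep := hM.balance_add s₀ s (τ s) hσ
  have := abs_le.1 (hM.abs_balance_le_one s₀ s σ)
  have := abs_le.1 (hM.abs_balance_le_one s₀ (τ s) σ)
  simp only [mem_content, hM.balance_rev _ _ hτ]
  rcases eq_or_ne σ τ with rfl | hστ
  · rw [hM.balance_apply hσ hs hσ, hM.netCount_singleton_self hσ] at hstep
    simp only [true_and, ne_eq, (hM.rev_ne hσ).symm, not_false_eq_true]
    omega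
  rcases eq_or_ne σ (rev τ) with rfl | hσr
  · rw [hM.balance_apply hτ hs hσ, hM.netCount_rev hτ, hM.netCount_singleton_self hτ] at hstep
    simp only [hM.rev_ne hτ, ne_eq, not_true_eq_false, false_and, or_false, iff_false]
    omega
  · rw [hM.balance_apply hτ hs hσ, hM.netCount_singleton_of_ne hσ hστ hσr] at hstep
    simp only [hστ, hσr, false_and, ne_eq, not_false_eq_true, true_and, false_or]
    omega

theorem content_apply_of_rev_notMem (hM : IsMedium T) (s₀ : S) {τ : S → S} (hτ : τ ∈ T)
    {s : S} (hs : τ s ≠ s) (hr : rev τ ∉ hM.content s₀ s) :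
    hM.content s₀ (τ s) = insert τ (hM.content s₀ s) := by
  ext σ
  rw [hM.mem_content_apply_iff s₀ hτ hs, Finset.mem_insert]
  constructor
  · rintro (⟨rfl, -⟩ | ⟨-, h⟩)
    exacts [.inl rfl, .inr h]
  · rintro (rfl | h)
    · exact .inl ⟨rfl, hr⟩
    · exact .inr ⟨fun h' => hr (h' ▸ h), h⟩

theorem content_apply_of_rev_mem (hM : IsMedium T) (s₀ : S) {τ : S → S} (hτ : τ ∈ T)
    {s : S} (hs : τ s ≠ s) (hr : rev τ ∈ hM.content s₀ s) :
    hM.content s₀ (τ s) = (hM.content s₀ s).erase (rev τ) := by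
  ext σ
  rw [hM.mem_content_apply_iff s₀ hτ hs, Finset.mem_erase]
  simp [hr]

theorem rev_notMem_content_of_mem (hM : IsMedium T) (s₀ : S) {τ : S → S} {u : S}
    (h : τ ∈ hM.content s₀ u) (s : S) : rev τ ∉ hM.content s₀ s := by
  have hτ := hM.mem_of_mem_content h
  rw [mem_content] at h ⊢
  have := hM.balance_add s₀ s u hτ
  have := abs_le.1 (hM.abs_balance_le_one s u τ)
  rw [hM.balance_rev _ _ hτ]
  omega

theorem rev_mem_content_of_apply_ne (hM : IsMedium T) (s₀ : S) {τ : S → S} (hτ : τ ∈ T)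
    {s s' : S} (hs : τ s ≠ s) (hr : rev τ ∈ hM.content s₀ s') : rev τ ∈ hM.content s₀ s := by
  by_contra hns
  exact hM.rev_notMem_content_of_mem s₀
    ((hM.mem_content_apply_iff s₀ hτ hs).2 (.inl ⟨rfl, hns⟩)) s' hr

theorem apply_eq_of_content_eq_insert (hM : IsMedium T) (s₀ : S) {τ : S → S} (hτ : τ ∈ T)
    {s u : S} (hns : τ ∉ hM.content s₀ s) (hu : hM.content s₀ u = insert τ (hM.content s₀ s)) :
    τ s = u := by
  have hlen : (hM.msg s u).length = 1 := by
    rw [← hM.card_content (hM.msg_mem s u) (hM.concise_msg s u) (hM.apply_msg s u),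
      ← card_symmDiff_content, hu, Finset.card_eq_one]
    refine ⟨τ, ?_⟩
    ext σ
    by_cases hστ : σ = τ <;> simp [Finset.mem_symmDiff, hστ, hns]
  obtain ⟨σ, hσ⟩ := List.length_eq_one_iff.1 hlen
  have hτu : τ ∈ hM.content s u := by
    have hτu' : τ ∈ hM.content s₀ u := hu ▸ Finset.mem_insert_self τ _
    rw [mem_content] at hns hτu' ⊢
    have := hM.balance_add s₀ s u hτ
    have := abs_le.1 (hM.abs_balance_le_one s₀ s τ)
    have := abs_le.1 (hM.abs_balance_le_one s u τ)
    omega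
  rw [content, hσ, List.toFinset_cons, List.toFinset_nil, insert_empty_eq,
    Finset.mem_singleton] at hτu
  simpa [hσ, hτu] using hM.apply_msg s u

noncomputable def contentEquiv (hM : IsMedium T) (s₀ : S) : S ≃ Set.range (hM.content s₀) :=
  Equiv.ofInjective _ (hM.content_injective s₀)

theorem conj_contentEquiv_eq_gammaAdd (hM : IsMedium T) (s₀ : S) {τ : S → S} (hτ : τ ∈ T)
    (hpos : ∀ s, rev τ ∉ hM.content s₀ s) :
    (hM.contentEquiv s₀).conj τ = gammaAdd (Set.range (hM.content s₀)) τ := by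
  funext A
  obtain ⟨s, rfl⟩ := (hM.contentEquiv s₀).surjective A
  rw [Equiv.conj_apply, Equiv.symm_apply_apply]
  apply Subtype.ext
  simp only [contentEquiv, Equiv.ofInjective_apply, gammaAdd]
  by_cases hs : τ s = s
  · rw [hs]
    split_ifs with hmem
    · obtain ⟨u, hu⟩ := hmem
      by_cases hτs : τ ∈ hM.content s₀ s
      · exact (Finset.insert_eq_of_mem hτs).symm
      obtain rfl : s = u := hs.symm.trans (hM.apply_eq_of_content_eq_insert s₀ hτ hτs hu)
      exact absurd (hu ▸ Finset.mem_insert_self τ _) hτs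
    · rfl
  · have hstep := hM.content_apply_of_rev_notMem s₀ hτ hs (hpos s)
    rw [dif_pos ⟨τ s, hstep⟩, hstep]

theorem conj_contentEquiv_eq_gammaRemove (hM : IsMedium T) (s₀ : S) {τ : S → S} (hτ : τ ∈ T)
    {s' : S} (hneg : rev τ ∈ hM.content s₀ s') :
    (hM.contentEquiv s₀).conj τ = gammaRemove (Set.range (hM.content s₀)) (rev τ) := by
  funext A
  obtain ⟨s, rfl⟩ := (hM.contentEquiv s₀).surjective A
  rw [Equiv.conj_apply, Equiv.symm_apply_apply]
  apply Subtype.ext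
  simp only [contentEquiv, Equiv.ofInjective_apply, gammaRemove]
  by_cases hs : τ s = s
  · rw [hs]
    split_ifs with hmem
    · obtain ⟨u, hu⟩ := hmem
      by_cases hr : rev τ ∈ hM.content s₀ s
      swap
      · exact (Finset.erase_eq_of_notMem hr).symm
      have hus : rev τ u = s := hM.apply_eq_of_content_eq_insert s₀ (hM.rev_mem hτ)
        (by simp [hu]) (by rw [hu, Finset.insert_erase hr])
      obtain rfl : s = u := by
        by_contra hsu
        exact hsu (hs.symm.trans ((hM.isReverse_rev hτ s u hsu).2 hus))
      rw [hu] at hr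
      exact absurd hr (Finset.notMem_erase _ _)
    · rfl
  · have hstep := hM.content_apply_of_rev_mem s₀ hτ hs
      (hM.rev_mem_content_of_apply_ne s₀ hτ hs hneg)
    rw [dif_pos ⟨τ s, hstep⟩, hstep]

theorem mediumTokens_range_content (hM : IsMedium T) (s₀ : S) :
    mediumTokens (Set.range (hM.content s₀)) = (hM.contentEquiv s₀).conj '' T := by
  obtain ⟨B, hB, hnotB⟩ : ∃ B ∈ Set.range (hM.content s₀), ∀ τ, τ ∉ B :=
    ⟨_, ⟨s₀, rfl⟩, by simp [content_self]⟩
  ext g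
  constructor
  · rintro ⟨x, ⟨_, ⟨u, rfl⟩, hxu⟩, -, rfl | rfl⟩
    · exact ⟨x, hM.mem_of_mem_content hxu,
        hM.conj_contentEquiv_eq_gammaAdd s₀ (hM.mem_of_mem_content hxu)
          (hM.rev_notMem_content_of_mem s₀ hxu)⟩
    · have hx := hM.mem_of_mem_content hxu
      refine ⟨rev x, hM.rev_mem hx, ?_⟩
      rw [hM.conj_contentEquiv_eq_gammaRemove s₀ (hM.rev_mem hx) (s' := u)
        (by rwa [hM.rev_rev hx]), hM.rev_rev hx]
  · rintro ⟨τ, hτ, rfl⟩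
    by_cases hneg : ∃ s', rev τ ∈ hM.content s₀ s'
    · obtain ⟨s', hs'⟩ := hneg
      rw [hM.conj_contentEquiv_eq_gammaRemove s₀ hτ hs']
      exact ⟨rev τ, ⟨_, ⟨s', rfl⟩, hs'⟩, ⟨B, hB, hnotB _⟩, .inr rfl⟩
    · push Not at hneg
      rw [hM.conj_contentEquiv_eq_gammaAdd s₀ hτ hneg]
      obtain ⟨s, hs⟩ := hM.exists_apply_ne hτ
      refine ⟨τ, ⟨_, ⟨τ s, rfl⟩, ?_⟩, ⟨B, hB, hnotB _⟩, .inl rfl⟩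
      rw [hM.content_apply_of_rev_notMem s₀ hτ hs (hneg s)]
      exact Finset.mem_insert_self τ _

end IsMedium

end Media

/-- Theorem 12.2: every medium `(S, T)` is isomorphic to the representing medium
`(F, G_F)` of some well-graded family `F` of finite subsets of a set `X`: there
are bijections `α : S → F` and `β : T → G_F` such that `s·τ = v` iff
`α(s)·β(τ) = α(v)` for all states `s, v` and tokens `τ`. -/
theorem medium_iso_representing_medium {S : Type u} {T : Set (S → S)}
    (hM : IsMedium T) :
    ∃ (X : Type u) (F : Set (Finset X)), WellGraded F ∧
      IsMedium (mediumTokens F) ∧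
      ∃ (α : S ≃ ↥F) (β : ↥T ≃ ↥(mediumTokens F)),
        ∀ (s v : S) (τ : ↥T), (τ : S → S) s = v ↔ (β τ : ↥F → ↥F) (α s) = α v := by
  obtain ⟨s₀, -, -⟩ := hM.1
  let α := hM.contentEquiv s₀
  have hT : mediumTokens (Set.range (hM.content s₀)) = α.conj '' T :=
    hM.mediumTokens_range_content s₀
  refine ⟨S → S, Set.range (hM.content s₀), hM.wellGraded_range_content s₀,
    hT ▸ hM.map_conj α, α,
    (Equiv.Set.image α.conj T α.conj.injective).trans (Equiv.setCongr hT.symm), fun s v τ => ?_⟩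
  simp
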